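/- arXiv:2012.08894 — 5 statements merged into one kernel-verified Lean document; each statement's English description precedes it below -/
import Mathlib

section
/- Let f : X → X be a homeomorphism of a compact metric space X satisfying the shadowing property. If f is sensitive with sensitivity constant ε > 0, then for each x ∈ X there exists a nonempty compact and perfect set C_x contained in the ε-unstable set W^u_ε(x). -/
open Metric

/-- `f` is sensitive with sensitivity constant `ε > 0`: for every `x` and every `δ > 0`
there exist `y` with `d(x,y) < δ` and `n ∈ ℕ` with `d(fⁿ(x), fⁿ(y)) > ε`. -/
def SensitiveWith {X : Type*} [MetricSpace X] (f : X → X) (ε : ℝ) : Prop :=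
  ∀ x : X, ∀ δ > (0 : ℝ), ∃ y : X, dist x y < δ ∧ ∃ n : ℕ, dist (f^[n] x) (f^[n] y) > ε

/-- The `n`-th iterate (for `n : ℤ`) of a homeomorphism `f`. -/
def zIter {X : Type*} [TopologicalSpace X] (f : X ≃ₜ X) (n : ℤ) : X → X :=
  fun y => (f.toEquiv ^ n) y

/-- The shadowing property for a homeomorphism `f`: for every `ε > 0` there is `δ > 0`
such that every `δ`-pseudo orbit `(xₙ)_{n ∈ ℤ}` is `ε`-shadowed by some point `y`. -/
def ShadowingProperty {X : Type*} [MetricSpace X] (f : X ≃ₜ X) : Prop :=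
  ∀ ε > (0 : ℝ), ∃ δ > (0 : ℝ), ∀ x : ℤ → X,
    (∀ n : ℤ, dist (f (x n)) (x (n + 1)) < δ) →
    ∃ y : X, ∀ n : ℤ, dist (zIter f n y) (x n) < ε

/-- The `ε`-unstable set of `x`:
`W^u_ε(x) = {y : d(f^{-n}(y), f^{-n}(x)) ≤ ε for every n ∈ ℕ}`. -/
def unstableSet {X : Type*} [MetricSpace X] (f : X ≃ₜ X) (ε : ℝ) (x : X) : Set X :=
  {y : X | ∀ n : ℕ, dist ((⇑f.symm)^[n] y) ((⇑f.symm)^[n] x) ≤ ε}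

namespace SensShadAux

lemma equiv_pow_apply {X : Type*} (e : Equiv.Perm X) (k : ℕ) (y : X) :
    (e ^ k) y = (⇑e)^[k] y := by
  induction k generalizing y with
  | zero => simp
  | succ n ih => rw [pow_succ, Equiv.Perm.mul_apply, ih, ← Function.iterate_succ_apply]

lemma zIter_nat {X : Type*} [TopologicalSpace X] (f : X ≃ₜ X) (k : ℕ) (y : X) :
    zIter f (k : ℤ) y = (⇑f)^[k] y := by
  rw [zIter, zpow_natCast, equiv_pow_apply]; rfl

lemma zIter_neg_nat {X : Type*} [TopologicalSpace X] (f : X ≃ₜ X) (k : ℕ) (y : X) :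
    zIter f (-(k : ℤ)) y = (⇑f.symm)^[k] y := by
  rw [zIter, zpow_neg, zpow_natCast, ← inv_pow, equiv_pow_apply]; rfl

variable {X : Type*}

/-- The tree of branch points: `Qt σ k` is the point of the `σ`-pseudo-orbit at the
`k`-th branch time. -/
def Qt (f Y : X → X) (N : X → ℕ) (x : X) (σ : ℕ → Bool) : ℕ → X
  | 0 => x
  | k+1 => f^[N (Qt f Y N x σ k)] (if σ k then Y (Qt f Y N x σ k) else Qt f Y N x σ k)

/-- The point right after the `k`-th branch decision. -/
def Zt (f Y : X → X) (N : X → ℕ) (x : X) (σ : ℕ → Bool) (k : ℕ) : X :=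
  if σ k then Y (Qt f Y N x σ k) else Qt f Y N x σ k

lemma Qt_succ (f Y : X → X) (N : X → ℕ) (x : X) (σ : ℕ → Bool) (k : ℕ) :
    Qt f Y N x σ (k+1) = f^[N (Qt f Y N x σ k)] (Zt f Y N x σ k) := rfl

/-- Branch times. -/
def Tt (f Y : X → X) (N : X → ℕ) (x : X) (σ : ℕ → Bool) : ℕ → ℕ
  | 0 => 0
  | k+1 => Tt f Y N x σ k + N (Qt f Y N x σ k)

/-- The stage a time `m ≥ 0` belongs to. -/
def stg (f Y : X → X) (N : X → ℕ) (x : X) (σ : ℕ → Bool) (m : ℕ) : ℕ :=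
  Nat.findGreatest (fun k => Tt f Y N x σ k ≤ m) m

/-- The `σ`-pseudo-orbit. -/
noncomputable def orb [TopologicalSpace X] (f : X ≃ₜ X) (Y : X → X) (N : X → ℕ) (x : X) (σ : ℕ → Bool) (m : ℤ) : X :=
  if m < 0 then (⇑f.symm)^[(-m).toNat] x
  else (⇑f)^[m.toNat - Tt ⇑f Y N x σ (stg ⇑f Y N x σ m.toNat)]
        (Zt ⇑f Y N x σ (stg ⇑f Y N x σ m.toNat))

variable (f Y : X → X) (N : X → ℕ) (x : X) (σ τ : ℕ → Bool)

lemma Tt_mono {k l : ℕ} (h : k ≤ l) : Tt f Y N x σ k ≤ Tt f Y N x σ l := by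
  induction l with
  | zero =>
    have hk : k = 0 := Nat.le_zero.mp h
    subst hk; exact le_refl _
  | succ n ih =>
    rcases Nat.lt_or_ge k (n+1) with h' | h'
    · have := ih (by omega)
      have : Tt f Y N x σ n ≤ Tt f Y N x σ (n+1) := by
        show Tt f Y N x σ n ≤ Tt f Y N x σ n + _
        omega
      omega
    · have : k = n + 1 := by omega
      subst this; rfl

lemma Tt_succ_lt (hN1 : ∀ z, 1 ≤ N z) (k : ℕ) :
    Tt f Y N x σ k < Tt f Y N x σ (k+1) := by
  show Tt f Y N x σ k < Tt f Y N x σ k + N (Qt f Y N x σ k)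
  have := hN1 (Qt f Y N x σ k)
  omega

lemma le_Tt (hN1 : ∀ z, 1 ≤ N z) (k : ℕ) : k ≤ Tt f Y N x σ k := by
  induction k with
  | zero => exact Nat.zero_le _
  | succ n ih =>
    have := Tt_succ_lt f Y N x σ hN1 n
    omega

lemma stg_spec (hN1 : ∀ z, 1 ≤ N z) (m : ℕ) :
    Tt f Y N x σ (stg f Y N x σ m) ≤ m ∧ m < Tt f Y N x σ (stg f Y N x σ m + 1) := by
  constructor
  · exact Nat.findGreatest_spec (P := fun k => Tt f Y N x σ k ≤ m) (Nat.zero_le m)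
      (show Tt f Y N x σ 0 ≤ m from Nat.zero_le m)
  · set K := stg f Y N x σ m with hK
    rcases Nat.lt_or_ge m (K + 1) with h | h
    · have := le_Tt f Y N x σ hN1 (K+1)
      -- K+1 > m, so Tt (K+1) ≥ K+1 > m
      omega
    · have h2 := Nat.findGreatest_is_greatest (Nat.lt_succ_self K) h
      rw [Nat.succ_eq_add_one] at h2
      omega

lemma stg_unique (hN1 : ∀ z, 1 ≤ N z) (m k : ℕ)
    (h1 : Tt f Y N x σ k ≤ m) (h2 : m < Tt f Y N x σ (k+1)) :
    stg f Y N x σ m = k := by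
  obtain ⟨hs1, hs2⟩ := stg_spec f Y N x σ hN1 m
  set K := stg f Y N x σ m with hK
  rcases Nat.lt_trichotomy K k with h | h | h
  · have : K + 1 ≤ k := h
    have := Tt_mono f Y N x σ this
    omega
  · exact h
  · have : k + 1 ≤ K := h
    have := Tt_mono f Y N x σ this
    omega

lemma agree (k : ℕ) (h : ∀ j < k, σ j = τ j) :
    Qt f Y N x σ k = Qt f Y N x τ k ∧ Tt f Y N x σ k = Tt f Y N x τ k := by
  induction k with
  | zero => exact ⟨rfl, rfl⟩
  | succ n ih =>
    obtain ⟨hq, ht⟩ := ih (fun j hj => h j (by omega))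
    have hb : σ n = τ n := h n (by omega)
    constructor
    · show f^[N (Qt f Y N x σ n)] _ = f^[N (Qt f Y N x τ n)] _
      rw [hq, hb]
    · show Tt f Y N x σ n + N (Qt f Y N x σ n) = Tt f Y N x τ n + N (Qt f Y N x τ n)
      rw [hq, ht]

lemma orb_zero [MetricSpace X] (f : X ≃ₜ X) :
    orb f Y N x σ 0 = Zt ⇑f Y N x σ 0 := rfl

lemma orb_neg [MetricSpace X] (f : X ≃ₜ X) (n : ℕ) (hn : 1 ≤ n) :
    orb f Y N x σ (-(n : ℤ)) = (⇑f.symm)^[n] x := by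
  have h1 : (-(n : ℤ)) < 0 := by omega
  simp [orb, h1]
  intro h; exact absurd h (by omega)

lemma orb_Tt [MetricSpace X] (f : X ≃ₜ X) (hN1 : ∀ z, 1 ≤ N z) (k : ℕ) :
    orb f Y N x σ ((Tt ⇑f Y N x σ k : ℕ) : ℤ) = Zt ⇑f Y N x σ k := by
  have hnn : ¬ ((Tt ⇑f Y N x σ k : ℤ) < 0) := by omega
  have hst : stg ⇑f Y N x σ (Tt ⇑f Y N x σ k) = k :=
    stg_unique ⇑f Y N x σ hN1 _ k (le_refl _) (Tt_succ_lt ⇑f Y N x σ hN1 k)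
  simp only [orb, if_neg hnn, Int.toNat_natCast, hst, Nat.sub_self, Function.iterate_zero, id]

lemma dist_Qt_Zt [MetricSpace X] (δ₀ : ℝ) (hδ₀ : 0 < δ₀)
    (hY : ∀ z, dist z (Y z) < δ₀) (k : ℕ) :
    dist (Qt f Y N x σ k) (Zt f Y N x σ k) < δ₀ := by
  unfold Zt
  cases hb : σ k <;> simp [hb, hδ₀, hY]

lemma dist_orb [MetricSpace X] (f : X ≃ₜ X) (δ₀ : ℝ) (hδ₀ : 0 < δ₀)
    (hY : ∀ z, dist z (Y z) < δ₀) (hN1 : ∀ z, 1 ≤ N z) (m : ℤ) :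
    dist (f (orb f Y N x σ m)) (orb f Y N x σ (m + 1)) < δ₀ := by
  rcases lt_trichotomy m (-1) with hm | hm | hm
  · have h1 : m < 0 := by omega
    have h2 : m + 1 < 0 := by omega
    simp only [orb, if_pos h1, if_pos h2]
    have hj : (-m).toNat = (-(m+1)).toNat + 1 := by omega
    rw [hj, Function.iterate_succ_apply', Homeomorph.apply_symm_apply, dist_self]
    exact hδ₀
  · subst hm
    have h1 : (-1 : ℤ) < 0 := by norm_num
    rw [show (-1 : ℤ) + 1 = 0 from by ring, orb_zero]
    simp only [orb, if_pos h1]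
    have : ((-(-1) : ℤ)).toNat = 1 := by omega
    rw [this, Function.iterate_one, Homeomorph.apply_symm_apply]
    show dist x (Zt ⇑f Y N x σ 0) < δ₀
    have := dist_Qt_Zt ⇑f Y N x σ δ₀ hδ₀ hY 0
    simpa [Qt] using this
  · obtain ⟨mm, rfl⟩ := Int.eq_ofNat_of_zero_le (by omega : (0:ℤ) ≤ m)
    have hm0 : ¬ ((mm : ℤ) < 0) := by omega
    have hm1 : ¬ ((mm : ℤ) + 1 < 0) := by omega
    have hmt : ((mm : ℤ) + 1).toNat = mm + 1 := by omega
    simp only [orb, if_neg hm0, if_neg hm1, hmt, Int.toNat_natCast]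
    set K := stg ⇑f Y N x σ mm with hKdef
    obtain ⟨hK1, hK2⟩ := stg_spec ⇑f Y N x σ hN1 mm
    rw [← hKdef] at hK1 hK2
    by_cases hc : Tt ⇑f Y N x σ (K + 1) ≤ mm + 1
    · have heq : Tt ⇑f Y N x σ (K + 1) = mm + 1 := by omega
      have hst : stg ⇑f Y N x σ (mm + 1) = K + 1 := by
        apply stg_unique ⇑f Y N x σ hN1 _ _ (le_of_eq heq)
        have := Tt_succ_lt ⇑f Y N x σ hN1 (K + 1)
        omega
      rw [hst, heq, Nat.sub_self, Function.iterate_zero, id]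
      rw [← Function.iterate_succ_apply' ⇑f (mm - Tt ⇑f Y N x σ K) (Zt ⇑f Y N x σ K)]
      have hn : mm - Tt ⇑f Y N x σ K + 1 = N (Qt ⇑f Y N x σ K) := by
        have hTs : Tt ⇑f Y N x σ (K + 1) = Tt ⇑f Y N x σ K + N (Qt ⇑f Y N x σ K) := rfl
        omega
      rw [Nat.succ_eq_add_one, hn, ← Qt_succ]
      exact dist_Qt_Zt ⇑f Y N x σ δ₀ hδ₀ hY (K + 1)
    · have hst : stg ⇑f Y N x σ (mm + 1) = K :=
        stg_unique ⇑f Y N x σ hN1 _ _ (by omega) (by omega)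
      rw [hst]
      have : mm + 1 - Tt ⇑f Y N x σ K = (mm - Tt ⇑f Y N x σ K) + 1 := by omega
      rw [this, Function.iterate_succ_apply', dist_self]
      exact hδ₀

lemma uncountable_nat_bool : Uncountable (ℕ → Bool) := by
  classical
  have h : Function.Injective (fun s : Set ℕ => (fun n => decide (n ∈ s) : ℕ → Bool)) := by
    intro s t h
    ext n
    have := congrFun h n
    simpa using this
  have hu : Uncountable (Set ℕ) := by
    rw [← not_countable_iff]
    intro hc
    obtain ⟨i, hi⟩ := (countable_iff_exists_injective (Set ℕ)).mp hc
    exact Function.cantor_injective i hi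
  exact h.uncountable

end SensShadAux

/-- If a homeomorphism `f` of a compact metric space has the shadowing property and is
sensitive with sensitivity constant `ε > 0`, then for each `x` there is a nonempty compact
and perfect set contained in `W^u_ε(x)`. -/
theorem sensitive_shadowing_unstable_perfect {X : Type*} [MetricSpace X] [CompactSpace X]
    (f : X ≃ₜ X) (hshad : ShadowingProperty f) (ε : ℝ) (hε : 0 < ε)
    (hsen : SensitiveWith (⇑f) ε) :
    ∀ x : X, ∃ C : Set X, C.Nonempty ∧ IsCompact C ∧ Perfect C ∧ C ⊆ unstableSet f ε x := by
  intro x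
  classical
  open SensShadAux in
  obtain ⟨δ, hδpos, hδ⟩ := hshad (ε / 4) (by positivity)
  set δ₀ := min δ (ε / 8) with hδ₀def
  have hδ₀pos : 0 < δ₀ := lt_min hδpos (by positivity)
  have hδ₀δ : δ₀ ≤ δ := min_le_left _ _
  have hδ₀ε : δ₀ ≤ ε / 8 := min_le_right _ _
  choose Y hY N hN using fun z => hsen z δ₀ hδ₀pos
  have hN1 : ∀ z, 1 ≤ N z := by
    intro z
    by_contra h
    have hz : N z = 0 := by omega
    have h2 := hN z
    rw [hz] at h2
    simp only [Function.iterate_zero, id] at h2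
    have := hY z
    linarith
  have horb : ∀ σ : ℕ → Bool, ∀ m : ℤ,
      dist (f (orb f Y N x σ m)) (orb f Y N x σ (m + 1)) < δ := fun σ m =>
    lt_of_lt_of_le (dist_orb Y N x σ f δ₀ hδ₀pos hY hN1 m) hδ₀δ
  choose g hg using fun σ : ℕ → Bool => hδ (orb f Y N x σ) (horb σ)
  -- membership
  have hmem : ∀ σ, g σ ∈ unstableSet f ε x := by
    intro σ n
    cases n with
    | zero =>
      simp only [Function.iterate_zero, id]
      have h1 := hg σ 0
      rw [show (0 : ℤ) = ((0 : ℕ) : ℤ) from rfl, zIter_nat] at h1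
      simp only [Function.iterate_zero, id] at h1
      rw [show ((0:ℕ) : ℤ) = (0:ℤ) from rfl, orb_zero] at h1
      have h2 := dist_Qt_Zt ⇑f Y N x σ δ₀ hδ₀pos hY 0
      have h3 : Qt ⇑f Y N x σ 0 = x := rfl
      rw [h3] at h2
      calc dist (g σ) x ≤ dist (g σ) (Zt ⇑f Y N x σ 0) + dist (Zt ⇑f Y N x σ 0) x :=
            dist_triangle _ _ _
        _ ≤ ε / 4 + δ₀ := by rw [dist_comm (Zt ⇑f Y N x σ 0) x]; linarith
        _ ≤ ε := by linarith
    | succ n =>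
      have h1 := hg σ (-(((n+1) : ℕ) : ℤ))
      rw [zIter_neg_nat, orb_neg Y N x σ f (n+1) (by omega)] at h1
      linarith
  -- injectivity
  have hinj : Function.Injective g := by
    intro σ τ hgeq
    by_contra hne
    obtain ⟨k0, hk0⟩ := Function.ne_iff.mp hne
    have hdec : ∃ k, σ k ≠ τ k := ⟨k0, hk0⟩
    set k := Nat.find hdec with hkdef
    have hk : σ k ≠ τ k := Nat.find_spec hdec
    have hmin : ∀ j < k, σ j = τ j := fun j hj => not_not.mp (Nat.find_min hdec hj)
    obtain ⟨hq, ht⟩ := agree ⇑f Y N x σ τ k hmin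
    -- the common branch time after the split
    have hTeq : Tt ⇑f Y N x σ (k+1) = Tt ⇑f Y N x τ (k+1) := by
      show Tt ⇑f Y N x σ k + N (Qt ⇑f Y N x σ k) =
        Tt ⇑f Y N x τ k + N (Qt ⇑f Y N x τ k)
      rw [hq, ht]
    have hsep : dist (Qt ⇑f Y N x σ (k+1)) (Qt ⇑f Y N x τ (k+1)) > ε := by
      rw [Qt_succ, Qt_succ]
      unfold Zt
      rw [hq]
      cases hbσ : σ k <;> cases hbτ : τ k <;>
          simp only [Bool.false_eq_true, if_false, if_true] <;>
          rw [hbσ, hbτ] at hk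
      · exact absurd rfl hk
      · first
        | exact hN _
        | (rw [dist_comm]; exact hN _)
      · first
        | exact hN _
        | (rw [dist_comm]; exact hN _)
      · exact absurd rfl hk
    have hoσ := orb_Tt Y N x σ f hN1 (k+1)
    have hoτ := orb_Tt Y N x τ f hN1 (k+1)
    have h1 := hg σ ((Tt ⇑f Y N x σ (k+1) : ℕ) : ℤ)
    have h2 := hg τ ((Tt ⇑f Y N x τ (k+1) : ℕ) : ℤ)
    rw [hoσ] at h1
    rw [hoτ] at h2
    rw [← hTeq, ← hgeq] at h2
    have h3 := dist_Qt_Zt ⇑f Y N x σ δ₀ hδ₀pos hY (k+1)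
    have h4 := dist_Qt_Zt ⇑f Y N x τ δ₀ hδ₀pos hY (k+1)
    set A := zIter f ((Tt ⇑f Y N x σ (k+1) : ℕ) : ℤ) (g σ) with hA
    have hchain : dist (Qt ⇑f Y N x σ (k+1)) (Qt ⇑f Y N x τ (k+1)) ≤
        dist (Qt ⇑f Y N x σ (k+1)) (Zt ⇑f Y N x σ (k+1)) +
        dist (Zt ⇑f Y N x σ (k+1)) A +
        dist A (Zt ⇑f Y N x τ (k+1)) +
        dist (Zt ⇑f Y N x τ (k+1)) (Qt ⇑f Y N x τ (k+1)) := by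
      have t1 := dist_triangle4 (Qt ⇑f Y N x σ (k+1)) (Zt ⇑f Y N x σ (k+1)) A
        (Qt ⇑f Y N x τ (k+1))
      have t2 := dist_triangle A (Zt ⇑f Y N x τ (k+1)) (Qt ⇑f Y N x τ (k+1))
      linarith
    rw [dist_comm (Zt ⇑f Y N x σ (k+1)) A] at hchain
    rw [dist_comm (Zt ⇑f Y N x τ (k+1)) (Qt ⇑f Y N x τ (k+1))] at hchain
    linarith
  -- the unstable set is closed
  have hclosed : IsClosed (unstableSet f ε x) := by
    have : unstableSet f ε x =
        ⋂ n : ℕ, (fun y => dist ((⇑f.symm)^[n] y) ((⇑f.symm)^[n] x)) ⁻¹' (Set.Iic ε) := by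
      ext y
      simp [unstableSet, Set.mem_iInter]
    rw [this]
    refine isClosed_iInter fun n => IsClosed.preimage ?_ isClosed_Iic
    exact Continuous.dist ((f.symm.continuous).iterate n) continuous_const
  -- the unstable set is uncountable
  have hunc : ¬ (unstableSet f ε x).Countable := by
    intro hc
    have hcsub : Countable (unstableSet f ε x) := hc.to_subtype
    have hGinj : Function.Injective
        (fun σ : ℕ → Bool => (⟨g σ, hmem σ⟩ : unstableSet f ε x)) :=
      fun a b h => hinj (congrArg Subtype.val h)
    have hunc2 : Uncountable (ℕ → Bool) := uncountable_nat_bool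
    have : Uncountable (unstableSet f ε x) := hGinj.uncountable
    exact (not_countable_iff.mpr this) hcsub
  obtain ⟨D, hD, hDne, hDsub⟩ :=
    exists_perfect_nonempty_of_isClosed_of_not_countable hclosed hunc
  exact ⟨D, hDne, hD.closed.isCompact, hD, hDsub⟩
end

section
/- Let f : X → X be a homeomorphism of a compact metric space X satisfying the shadowing property, and suppose f is sensitive with sensitivity constant ε > 0. Then for every x ∈ X there exists a point c ∈ X with c ≠ x and c ∈ W^u_{ε/2}(x); in particular, every set W^u_ε(x) contains a point different from x. -/
open Metric

lemma zIter_natCast {X : Type*} [TopologicalSpace X] (f : X ≃ₜ X) (n : ℕ) (w : X) :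
    zIter f (n : ℤ) w = (⇑f)^[n] w := by
  simp [zIter, zpow_natCast, ← Equiv.Perm.iterate_eq_pow]

lemma zIter_neg_natCast {X : Type*} [TopologicalSpace X] (f : X ≃ₜ X) (n : ℕ) (w : X) :
    zIter f (-(n : ℤ)) w = (⇑f.symm)^[n] w := by
  show (f.toEquiv ^ (-(n : ℤ))) w = _
  rw [zpow_neg, zpow_natCast, ← inv_pow, ← Equiv.Perm.iterate_eq_pow]
  rfl

lemma zIter_add_one {X : Type*} [TopologicalSpace X] (f : X ≃ₜ X) (k : ℤ) (w : X) :
    zIter f (k + 1) w = f (zIter f k w) := by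
  show (f.toEquiv ^ (k + 1)) w = _
  rw [add_comm, zpow_add, zpow_one]
  rfl

/-- If a homeomorphism `f` of a compact metric space has the shadowing property and is
sensitive with sensitivity constant `ε > 0`, then for every `x` there is a point `c ≠ x`
with `c ∈ W^u_{ε/2}(x)`; in particular `W^u_ε(x)` contains a point different from `x`. -/
theorem unstable_set_nontrivial {X : Type*} [MetricSpace X] [CompactSpace X]
    (f : X ≃ₜ X) (hshad : ShadowingProperty f) (ε : ℝ) (hε : 0 < ε)
    (hsen : SensitiveWith (⇑f) ε) :
    ∀ x : X, (∃ c : X, c ≠ x ∧ c ∈ unstableSet f (ε / 2) x) ∧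
      (∃ c : X, c ≠ x ∧ c ∈ unstableSet f ε x) := by
  intro x
  -- get δ from shadowing for ε/4
  obtain ⟨δ, hδ, hsh⟩ := hshad (ε / 4) (by linarith)
  -- uniform continuity of f
  have hUC : UniformContinuous (⇑f) :=
    CompactSpace.uniformContinuous_of_continuous f.continuous
  obtain ⟨δ', hδ', hδ'f⟩ := Metric.uniformContinuous_iff.mp hUC δ hδ
  -- sensitivity at x with min (δ', ε)
  obtain ⟨y, hxy, n, hn⟩ := hsen x (min δ' ε) (lt_min hδ' hε)
  -- pseudo-orbit
  set z : ℤ → X := fun k => if k ≤ 0 then zIter f k x else zIter f k y with hz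
  have hpseudo : ∀ k : ℤ, dist (f (z k)) (z (k + 1)) < δ := by
    intro k
    rcases lt_trichotomy k 0 with hk | hk | hk
    · have h1 : k ≤ 0 := le_of_lt hk
      have h2 : k + 1 ≤ 0 := hk
      simp only [hz, if_pos h1, if_pos h2, ← zIter_add_one, dist_self]
      exact hδ
    · subst hk
      have h2 : ¬ ((0 : ℤ) + 1 ≤ 0) := by norm_num
      simp only [hz, if_pos le_rfl, if_neg h2]
      have e0 : zIter f 0 x = x := rfl
      have e1 : zIter f (0 + 1) y = f y := by
        rw [zIter_add_one]; rfl
      rw [e0, e1]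
      exact hδ'f (lt_of_lt_of_le hxy (min_le_left _ _))
    · have h1 : ¬ (k ≤ 0) := not_le.mpr hk
      have h2 : ¬ (k + 1 ≤ 0) := by omega
      simp only [hz, if_neg h1, if_neg h2, ← zIter_add_one, dist_self]
      exact hδ
  obtain ⟨c, hc⟩ := hsh z hpseudo
  -- c lies in the unstable set
  have hun : ∀ m : ℕ, dist ((⇑f.symm)^[m] c) ((⇑f.symm)^[m] x) ≤ ε / 2 := by
    intro m
    have hm : z (-(m : ℤ)) = zIter f (-(m : ℤ)) x := by
      simp [hz, neg_nonpos.mpr (Int.natCast_nonneg m)]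
    have := hc (-(m : ℤ))
    rw [hm, zIter_neg_natCast, zIter_neg_natCast] at this
    linarith
  -- c ≠ x
  have hne : c ≠ x := by
    intro hcx
    subst hcx
    rcases Nat.eq_zero_or_pos n with hn0 | hnpos
    · subst hn0
      simp only [Function.iterate_zero, id_eq] at hn
      exact absurd hn (not_lt.mpr (le_of_lt (lt_of_lt_of_le hxy (min_le_right _ _))))
    · have hzn : z (n : ℤ) = zIter f (n : ℤ) y := by
        have : ¬ ((n : ℤ) ≤ 0) := by exact_mod_cast not_le.mpr (Int.natCast_pos.mpr hnpos)
        simp [hz, this, hnpos.ne']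
      have := hc (n : ℤ)
      rw [hzn, zIter_natCast, zIter_natCast] at this
      linarith
  refine ⟨⟨c, hne, hun⟩, ⟨c, hne, fun m => le_trans (hun m) (by linarith)⟩⟩
end

section
/- Let f : X → X be an equicontinuous homeomorphism of a compact metric space X. If f is positively countably-expansive, then X is countable. -/
open Metric

/-- `f` is equicontinuous: for every `ε > 0` there is `δ > 0` such that `d(x,y) < δ` implies
`d(fⁿ(x), fⁿ(y)) < ε` for every `n ∈ ℕ`. -/
def EquicontinuousMap {X : Type*} [MetricSpace X] (f : X → X) : Prop :=
  ∀ ε > (0 : ℝ), ∃ δ > (0 : ℝ), ∀ x y : X, dist x y < δ →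
    ∀ n : ℕ, dist (f^[n] x) (f^[n] y) < ε

/-- The `ε`-stable set of `x`. -/
def stableSetE {X : Type*} [MetricSpace X] (f : X → X) (ε : ℝ) (x : X) : Set X :=
  {y : X | ∀ n : ℕ, dist (f^[n] y) (f^[n] x) ≤ ε}

/-- `f` is positively countably-expansive. -/
def PosCountablyExpansive {X : Type*} [MetricSpace X] (f : X → X) : Prop :=
  ∃ ε > (0 : ℝ), ∀ x : X, (stableSetE f ε x).Countable

/-- An equicontinuous, positively countably-expansive homeomorphism of a compact metric
space can only be defined on a countable space. -/
theorem equicontinuous_posCountablyExpansive_countable {X : Type*} [MetricSpace X]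
    [CompactSpace X] (f : X ≃ₜ X) (heq : EquicontinuousMap (⇑f))
    (hce : PosCountablyExpansive (⇑f)) :
    Countable X := by
  obtain ⟨ε, hε, hcount⟩ := hce
  obtain ⟨δ, hδ, hδε⟩ := heq ε hε
  have hball : ∀ x : X, (ball x δ).Countable := fun x =>
    (hcount x).mono fun y hy n => le_of_lt (hδε y x (mem_ball.mp hy) n)
  obtain ⟨t, ht⟩ := (isCompact_univ (X := X)).elim_finite_subcover
    (fun x : X => ball x δ) (fun x => isOpen_ball)
    (fun x _ => Set.mem_iUnion.mpr ⟨x, mem_ball_self hδ⟩)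
  rw [← Set.countable_univ_iff]
  exact ((Set.Countable.biUnion (t.countable_toSet) (fun x _ => hball x))).mono ht
end

section
/- Let f : X → X be a homeomorphism of a compact metric space X satisfying the shadowing property, and suppose f is sensitive with sensitivity constant ε > 0. Then for each x ∈ X the ε-unstable set W^u_ε(x) is uncountable. -/
open Metric

section Aux

private lemma zIter_neg_nat {X : Type*} [TopologicalSpace X]
    (f : X ≃ₜ X) (n : ℕ) (y : X) : zIter f (-(n:ℤ)) y = (⇑f.symm)^[n] y := by
  show (f.toEquiv ^ (-(n:ℤ))) y = _
  rw [zpow_neg, zpow_natCast, ← inv_pow, show (f.toEquiv)⁻¹ = f.symm.toEquiv from rfl,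
    ← Equiv.Perm.iterate_eq_pow]
  rfl

private lemma zIter_zero {X : Type*} [TopologicalSpace X] (f : X ≃ₜ X) (y : X) :
    zIter f 0 y = y := by
  simp [zIter]

variable {X : Type*} [MetricSpace X] (f : X ≃ₜ X) (Y : X → X) (M : X → ℕ) (x : X)

/-- branch selector -/
private def cc (z : X) (b : Bool) : X := if b then Y z else z

/-- the branching data: `(ZZ σ k).1` is the base point of the `k`-th block of the
pseudo-orbit coded by `σ`, `(ZZ σ k).2` the starting time of that block. -/
private def ZZ (σ : ℕ → Bool) : ℕ → X × ℕ
  | 0 => (x, 0)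
  | k+1 => ((⇑f)^[M (ZZ σ k).1 + 1] (cc Y (ZZ σ k).1 (σ k)), (ZZ σ k).2 + M (ZZ σ k).1 + 1)

private lemma TT_zero (σ : ℕ → Bool) : (ZZ f Y M x σ 0).2 = 0 := rfl

private lemma zz_zero_fst (σ : ℕ → Bool) : (ZZ f Y M x σ 0).1 = x := rfl

private lemma TT_succ (σ : ℕ → Bool) (k : ℕ) :
    (ZZ f Y M x σ (k+1)).2 = (ZZ f Y M x σ k).2 + M (ZZ f Y M x σ k).1 + 1 := rfl

private lemma zz_succ_fst (σ : ℕ → Bool) (k : ℕ) :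
    (ZZ f Y M x σ (k+1)).1 = (⇑f)^[M (ZZ f Y M x σ k).1 + 1] (cc Y (ZZ f Y M x σ k).1 (σ k)) := rfl

private lemma TT_mono (σ : ℕ → Bool) : StrictMono (fun k => (ZZ f Y M x σ k).2) :=
  strictMono_nat_of_lt_succ fun k => by
    show (ZZ f Y M x σ k).2 < (ZZ f Y M x σ (k+1)).2
    rw [TT_succ]; omega

private lemma le_TT (σ : ℕ → Bool) : ∀ k, k ≤ (ZZ f Y M x σ k).2 := by
  intro k
  induction k with
  | zero => exact Nat.zero_le _
  | succ k ih => have := TT_succ f Y M x σ k; omega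

/-- stage of time `n` in the pseudo-orbit coded by `σ` -/
private def KK (σ : ℕ → Bool) (n : ℕ) : ℕ :=
  Nat.findGreatest (fun k => (ZZ f Y M x σ k).2 ≤ n) n

private lemma KK_le (σ : ℕ → Bool) (n : ℕ) : (ZZ f Y M x σ (KK f Y M x σ n)).2 ≤ n :=
  Nat.findGreatest_spec (P := fun k => (ZZ f Y M x σ k).2 ≤ n) (Nat.zero_le n)
    (by exact Nat.zero_le n)

private lemma lt_KK_succ (σ : ℕ → Bool) (n : ℕ) : n < (ZZ f Y M x σ (KK f Y M x σ n + 1)).2 := by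
  by_contra h
  push_neg at h
  exact Nat.findGreatest_is_greatest (P := fun k => (ZZ f Y M x σ k).2 ≤ n)
    (Nat.lt_succ_self _) (le_trans (le_TT f Y M x σ _) h) h

private lemma KK_eq (σ : ℕ → Bool) (n k : ℕ) (h1 : (ZZ f Y M x σ k).2 ≤ n)
    (h2 : n < (ZZ f Y M x σ (k+1)).2) : KK f Y M x σ n = k := by
  rcases lt_trichotomy (KK f Y M x σ n) k with h | h | h
  · exact absurd h1 (Nat.findGreatest_is_greatest (P := fun k => (ZZ f Y M x σ k).2 ≤ n) h
      (le_trans (le_TT f Y M x σ k) h1))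
  · exact h
  · exfalso
    have hmono : (ZZ f Y M x σ (k+1)).2 ≤ (ZZ f Y M x σ (KK f Y M x σ n)).2 :=
      (TT_mono f Y M x σ).monotone (Nat.succ_le_of_lt h)
    have := KK_le f Y M x σ n
    omega

private lemma ZZ_agree (σ τ : ℕ → Bool) (k : ℕ) (h : ∀ i < k, σ i = τ i) :
    ZZ f Y M x σ k = ZZ f Y M x τ k := by
  induction k with
  | zero => rfl
  | succ k ih =>
    have hk := ih (fun i hi => h i (Nat.lt_succ_of_lt hi))
    show ((⇑f)^[M (ZZ f Y M x σ k).1 + 1] (cc Y (ZZ f Y M x σ k).1 (σ k)),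
      (ZZ f Y M x σ k).2 + M (ZZ f Y M x σ k).1 + 1) = _
    rw [hk, h k (Nat.lt_succ_self k)]
    rfl

/-- the pseudo-orbit coded by `σ` -/
private def PP (σ : ℕ → Bool) (n : ℤ) : X :=
  if n < 0 then (⇑f.symm)^[(-n).toNat] x
  else (⇑f)^[n.toNat - (ZZ f Y M x σ (KK f Y M x σ n.toNat)).2]
    (cc Y (ZZ f Y M x σ (KK f Y M x σ n.toNat)).1 (σ (KK f Y M x σ n.toNat)))

private lemma PP_nat (σ : ℕ → Bool) (n k : ℕ) (h1 : (ZZ f Y M x σ k).2 ≤ n)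
    (h2 : n < (ZZ f Y M x σ (k+1)).2) :
    PP f Y M x σ (n : ℤ) = (⇑f)^[n - (ZZ f Y M x σ k).2] (cc Y (ZZ f Y M x σ k).1 (σ k)) := by
  have hK : KK f Y M x σ n = k := KK_eq f Y M x σ n k h1 h2
  simp only [PP, if_neg (by omega : ¬ (n:ℤ) < 0), Int.toNat_natCast, hK]

private lemma PP_neg (σ : ℕ → Bool) (n : ℕ) :
    PP f Y M x σ (-((n+1 : ℕ) : ℤ)) = (⇑f.symm)^[n+1] x := by
  simp only [PP, if_pos (by omega : (-((n+1:ℕ):ℤ)) < 0)]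
  norm_num

end Aux

/-- If a homeomorphism `f` of a compact metric space has the shadowing property and is
sensitive with sensitivity constant `ε > 0`, then for each `x` the `ε`-unstable set
`W^u_ε(x)` is uncountable. -/
theorem unstable_set_uncountable {X : Type*} [MetricSpace X] [CompactSpace X]
    (f : X ≃ₜ X) (hshad : ShadowingProperty f) (ε : ℝ) (hε : 0 < ε)
    (hsen : SensitiveWith (⇑f) ε) :
    ∀ x : X, ¬ (unstableSet f ε x).Countable := by
  intro x hcount
  obtain ⟨δ0, hδ0pos, hδ0⟩ := hshad (ε/3) (by positivity)
  set δ := min δ0 (ε/3) with hδdef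
  have hδpos : 0 < δ := lt_min hδ0pos (by positivity)
  have hδδ0 : δ ≤ δ0 := min_le_left _ _
  have hδε : δ ≤ ε/3 := min_le_right _ _
  have hs : ∀ z : X, ∃ y : X, dist z y < δ ∧
      ∃ n : ℕ, dist ((⇑f)^[n] z) ((⇑f)^[n] y) > ε := fun z => hsen z δ hδpos
  choose Y hY M hM using hs
  -- basic distance bound for the branch selector
  have hcc0 : ∀ (z : X) (b : Bool), dist z (cc Y z b) < δ := by
    intro z b
    cases b
    · simpa [cc] using hδpos
    · simpa [cc] using hY z
  -- the pseudo-orbits are δ0-pseudo-orbits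
  have hjump : ∀ (σ : ℕ → Bool) (n : ℤ),
      dist (f (PP f Y M x σ n)) (PP f Y M x σ (n+1)) < δ0 := by
    intro σ n
    rcases lt_trichotomy n (-1) with hn | hn | hn
    · have h1 : n < 0 := by omega
      have h2 : n + 1 < 0 := by omega
      simp only [PP, if_pos h1, if_pos h2]
      have e1 : (-n).toNat = (-(n+1)).toNat + 1 := by omega
      rw [e1, Function.iterate_succ_apply', Homeomorph.apply_symm_apply]
      simpa using hδ0pos
    · subst hn
      have hP1 : PP f Y M x σ (-1 : ℤ) = (⇑f.symm)^[1] x := by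
        simpa using PP_neg f Y M x σ 0
      have hP0 : PP f Y M x σ ((-1 : ℤ) + 1) = cc Y x (σ 0) := by
        norm_num
        have h2 : (0:ℕ) < (ZZ f Y M x σ (0+1)).2 := by
          have := TT_succ f Y M x σ 0; omega
        have := PP_nat f Y M x σ 0 0 (by rw [TT_zero]) h2
        simpa [zz_zero_fst f Y M x σ, TT_zero f Y M x σ] using this
      rw [hP1, hP0]
      simp only [Function.iterate_one, Homeomorph.apply_symm_apply]
      exact lt_of_lt_of_le (hcc0 x (σ 0)) hδδ0
    · obtain ⟨m, rfl⟩ : ∃ m : ℕ, n = (m : ℤ) := ⟨n.toNat, by omega⟩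
      set k := KK f Y M x σ m with hk
      have hA : (ZZ f Y M x σ k).2 ≤ m := KK_le f Y M x σ m
      have hB : m < (ZZ f Y M x σ (k + 1)).2 := lt_KK_succ f Y M x σ m
      have hPn : PP f Y M x σ (m:ℤ) =
          (⇑f)^[m - (ZZ f Y M x σ k).2] (cc Y (ZZ f Y M x σ k).1 (σ k)) :=
        PP_nat f Y M x σ m k hA hB
      have hm1 : ((m:ℤ)+1) = ((m+1 : ℕ) : ℤ) := by push_cast; ring
      rw [hm1]
      by_cases hc : m + 1 < (ZZ f Y M x σ (k+1)).2
      · have hPn1 : PP f Y M x σ ((m+1:ℕ):ℤ) =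
            (⇑f)^[m + 1 - (ZZ f Y M x σ k).2] (cc Y (ZZ f Y M x σ k).1 (σ k)) :=
          PP_nat f Y M x σ (m+1) k (by omega) hc
        rw [hPn, hPn1]
        have e : m + 1 - (ZZ f Y M x σ k).2 = (m - (ZZ f Y M x σ k).2) + 1 := by omega
        rw [e, Function.iterate_succ_apply']
        simpa using hδ0pos
      · have hc' : m + 1 = (ZZ f Y M x σ (k+1)).2 := by omega
        have hk2 : (ZZ f Y M x σ (k+1)).2 < (ZZ f Y M x σ (k+1+1)).2 := by
          have := TT_succ f Y M x σ (k+1); omega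
        have hPn1 : PP f Y M x σ ((m+1:ℕ):ℤ) =
            (⇑f)^[m + 1 - (ZZ f Y M x σ (k+1)).2] (cc Y (ZZ f Y M x σ (k+1)).1 (σ (k+1))) :=
          PP_nat f Y M x σ (m+1) (k+1) (le_of_eq hc'.symm) (by omega)
        rw [hPn, hPn1]
        have e2 : m + 1 - (ZZ f Y M x σ (k+1)).2 = 0 := by omega
        rw [e2, Function.iterate_zero_apply]
        have hTs := TT_succ f Y M x σ k
        have e3 : m - (ZZ f Y M x σ k).2 + 1 = M (ZZ f Y M x σ k).1 + 1 := by omega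
        rw [show (f ((⇑f)^[m - (ZZ f Y M x σ k).2] (cc Y (ZZ f Y M x σ k).1 (σ k))) : X)
            = (⇑f)^[m - (ZZ f Y M x σ k).2 + 1] (cc Y (ZZ f Y M x σ k).1 (σ k)) from
          (Function.iterate_succ_apply' _ _ _).symm]
        rw [e3, ← zz_succ_fst f Y M x σ k]
        exact lt_of_lt_of_le (hcc0 _ _) hδδ0
  -- shadow each pseudo-orbit
  have hsh : ∀ σ : ℕ → Bool, ∃ y, ∀ n : ℤ, dist (zIter f n y) (PP f Y M x σ n) < ε/3 :=
    fun σ => hδ0 (PP f Y M x σ) (hjump σ)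
  choose g hg using hsh
  have hP0 : ∀ σ : ℕ → Bool, PP f Y M x σ (0:ℤ) = cc Y x (σ 0) := by
    intro σ
    have h2 : (0:ℕ) < (ZZ f Y M x σ (0+1)).2 := by
      have := TT_succ f Y M x σ 0; omega
    have := PP_nat f Y M x σ 0 0 (by rw [TT_zero]) h2
    simpa [zz_zero_fst f Y M x σ, TT_zero f Y M x σ] using this
  -- all shadowing points lie in the unstable set
  have hmem : ∀ σ : ℕ → Bool, g σ ∈ unstableSet f ε x := by
    intro σ
    simp only [unstableSet, Set.mem_setOf_eq]
    intro n
    cases n with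
    | zero =>
      simp only [Function.iterate_zero, id_eq]
      have h0 := hg σ 0
      rw [hP0 σ, zIter_zero] at h0
      have h1 : dist (cc Y x (σ 0)) x < ε/3 := by
        rw [dist_comm]; exact lt_of_lt_of_le (hcc0 x (σ 0)) hδε
      have := dist_triangle (g σ) (cc Y x (σ 0)) x
      linarith
    | succ n =>
      have h := hg σ (-((n+1 : ℕ) : ℤ))
      rw [zIter_neg_nat, PP_neg] at h
      linarith
  -- distinct codes give distinct shadowing points
  have hsep : ∀ (z : X) (b b' : Bool), b ≠ b' →
      ε < dist ((⇑f)^[M z] (cc Y z b)) ((⇑f)^[M z] (cc Y z b')) := by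
    intro z b b' hbb
    cases b <;> cases b'
    · exact absurd rfl hbb
    · simpa [cc] using hM z
    · rw [dist_comm]; simpa [cc] using hM z
    · exact absurd rfl hbb
  have hinj : Function.Injective g := by
    intro σ τ hgτ
    by_contra hne
    obtain ⟨k0, hk0⟩ := Function.ne_iff.mp hne
    have hex : ∃ k, σ k ≠ τ k := ⟨k0, hk0⟩
    set k := Nat.find hex with hkdef
    have hkspec : σ k ≠ τ k := Nat.find_spec hex
    have hkmin : ∀ i < k, σ i = τ i := fun i hi => not_not.mp (Nat.find_min hex hi)
    have hZeq : ZZ f Y M x σ k = ZZ f Y M x τ k := ZZ_agree f Y M x σ τ k hkmin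
    set t := (ZZ f Y M x σ k).2 + M (ZZ f Y M x σ k).1 with htdef
    have hTσ1 := TT_succ f Y M x σ k
    have hTτ1 := TT_succ f Y M x τ k
    have e2 : (ZZ f Y M x τ k).2 = (ZZ f Y M x σ k).2 := by rw [hZeq]
    have e1 : M (ZZ f Y M x τ k).1 = M (ZZ f Y M x σ k).1 := by rw [hZeq]
    have hPσ : PP f Y M x σ (t:ℤ) =
        (⇑f)^[M (ZZ f Y M x σ k).1] (cc Y (ZZ f Y M x σ k).1 (σ k)) := by
      have h := PP_nat f Y M x σ t k (by omega) (by omega)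
      rw [h]
      congr 1
      omega
    have hPτ : PP f Y M x τ (t:ℤ) =
        (⇑f)^[M (ZZ f Y M x σ k).1] (cc Y (ZZ f Y M x σ k).1 (τ k)) := by
      have h := PP_nat f Y M x τ t k (by omega) (by omega)
      rw [← hZeq] at h
      rw [h]
      congr 1
      omega
    have h1 := hg σ (t:ℤ)
    have h2 := hg τ (t:ℤ)
    rw [hgτ] at h1
    have hd : dist (PP f Y M x σ (t:ℤ)) (PP f Y M x τ (t:ℤ)) ≤
        dist (zIter f (t:ℤ) (g τ)) (PP f Y M x σ (t:ℤ)) +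
        dist (zIter f (t:ℤ) (g τ)) (PP f Y M x τ (t:ℤ)) := by
      rw [dist_comm (zIter f (t:ℤ) (g τ)) (PP f Y M x σ (t:ℤ))]
      exact dist_triangle _ _ _
    have hgt : ε < dist (PP f Y M x σ (t:ℤ)) (PP f Y M x τ (t:ℤ)) := by
      rw [hPσ, hPτ]
      exact hsep _ _ _ hkspec
    linarith
  -- conclude: uncountably many points in a countable set
  have hrange : Set.range g ⊆ unstableSet f ε x := by
    rintro _ ⟨σ, rfl⟩; exact hmem σ
  have hcg : (Set.range g).Countable := hcount.mono hrange
  have hctble : Countable (ℕ → Bool) := by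
    have := hcg.to_subtype
    exact Countable.of_equiv _ (Equiv.ofInjective g hinj).symm
  obtain ⟨e, he⟩ := countable_iff_exists_surjective.mp hctble
  obtain ⟨kk, hkk⟩ := he (fun n => !(e n n))
  exact (Bool.not_ne_self _ (congrFun hkk kk).symm).elim
end

section
/- Let f : X → X be a homeomorphism of a compact metric space and x ∈ X a chain-recurrent point. Then for any ε > 0, the stable set W^s(x) is contained in ⋃_{n ∈ ℕ∪{0}} f^{-n}(W^s_ε(f^n(x))). Consequently, if f is positively countably-expansive, then W^s(x) is countable for every x ∈ X. -/
open Metric Filter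

/-- `x` is a chain-recurrent point of `f`: for every `ε > 0` there is a non-trivial finite
`ε`-pseudo orbit starting and ending at `x`. -/
def ChainRecurrentPt {X : Type*} [MetricSpace X] (f : X → X) (x : X) : Prop :=
  ∀ ε > (0 : ℝ), ∃ m : ℕ, 1 ≤ m ∧ ∃ y : ℕ → X, y 0 = x ∧ y m = x ∧
    ∀ i < m, dist (f (y i)) (y (i + 1)) < ε

/-- The stable set of `x`: `W^s(x) = {y : d(f^k(y), f^k(x)) → 0 as k → ∞}`. -/
def stableSet {X : Type*} [MetricSpace X] (f : X → X) (x : X) : Set X :=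
  {y : X | Tendsto (fun k : ℕ => dist (f^[k] y) (f^[k] x)) atTop (nhds 0)}

/-- For a homeomorphism `f` of a compact metric space and a chain-recurrent point `x`:
for every `ε > 0`, `W^s(x) ⊆ ⋃_{n ∈ ℕ∪{0}} f^{-n}(W^s_ε(fⁿ(x)))`; consequently, if `f` is
positively countably-expansive, then `W^s(x)` is countable for every `x ∈ X`. -/
theorem stable_set_subset_union_preimages {X : Type*} [MetricSpace X] [CompactSpace X]
    (f : X ≃ₜ X) (x : X) (hx : ChainRecurrentPt (⇑f) x) :
    (∀ ε > (0 : ℝ), stableSet (⇑f) x ⊆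
        ⋃ n : ℕ, (⇑f)^[n] ⁻¹' stableSetE (⇑f) ε ((⇑f)^[n] x)) ∧
      (PosCountablyExpansive (⇑f) → ∀ z : X, (stableSet (⇑f) z).Countable) := by
  have key : ∀ ε > (0 : ℝ), ∀ z : X, stableSet (⇑f) z ⊆
      ⋃ n : ℕ, (⇑f)^[n] ⁻¹' stableSetE (⇑f) ε ((⇑f)^[n] z) := by
    intro ε hε z y hy
    have h : ∀ᶠ k in atTop, dist ((⇑f)^[k] y) ((⇑f)^[k] z) < ε :=
      hy.eventually_lt_const hε
    obtain ⟨N, hN⟩ := eventually_atTop.mp h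
    refine Set.mem_iUnion.mpr ⟨N, ?_⟩
    intro n
    have h1 : (⇑f)^[n] ((⇑f)^[N] y) = (⇑f)^[n + N] y :=
      (Function.iterate_add_apply _ n N y).symm
    have h2 : (⇑f)^[n] ((⇑f)^[N] z) = (⇑f)^[n + N] z :=
      (Function.iterate_add_apply _ n N z).symm
    show dist ((⇑f)^[n] ((⇑f)^[N] y)) ((⇑f)^[n] ((⇑f)^[N] z)) ≤ ε
    rw [h1, h2]
    exact (hN (n + N) (Nat.le_add_left N n)).le
  refine ⟨fun ε hε => key ε hε x, ?_⟩
  rintro ⟨ε, hε, hc⟩ z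
  refine ((key ε hε z) |> Set.Countable.mono) ?_
  exact Set.countable_iUnion fun n =>
    (hc _).preimage (f.injective.iterate n)
end
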